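/- arXiv:1412.7349 — 3 statements merged into one kernel-verified Lean document; each statement's English description precedes it below -/
import Mathlib

section
/- Let R_n = Γ(n/2 + 1)^{1/n} / √π. Then (R_n / R_{n-1})^{n-1} → √e as n → ∞. -/
/-!
Write `A n = log Γ(n/2 + 1)`, so that the logarithm of the `n`-th term is
`A n - A (n - 1) - A n / n`. With `x = n/2`, log-convexity of `Γ` squeezes
`A n - A (n - 1) = log Γ(x + 1) - log Γ(x + 1/2)` between `log x / 2` and `log (x + 1/2) / 2`.
Legendre's duplication formula turns `A n + A (n - 1)` into `log n! - n log 2 + log π / 2`,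
so Stirling's formula gives `A n / n = log x / 2 - 1/2 + o(1)`. The difference tends to `1/2`.
-/

open Real Filter

/-- The radius of the `n`-dimensional Euclidean ball of unit volume. -/
noncomputable def unitBallRadius (n : ℕ) : ℝ :=
  (Real.Gamma ((n : ℝ) / 2 + 1)) ^ ((1 : ℝ) / n) / Real.sqrt π

open Topology

namespace Real

lemma tendsto_log_div_self : Tendsto (fun x : ℝ => log x / x) atTop (𝓝 0) := by
  simpa using isLittleO_log_id_atTop.tendsto_div_nhds_zero

lemma log_Gamma_add_one {x : ℝ} (hx : 0 < x) : log (Gamma (x + 1)) = log x + log (Gamma x) := by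
  rw [Gamma_add_one hx.ne', log_mul hx.ne' (Gamma_pos_of_pos hx).ne']

lemma log_Gamma_midpoint_le {x y : ℝ} (hx : 0 < x) (hy : 0 < y) :
    log (Gamma ((x + y) / 2)) ≤ (log (Gamma x) + log (Gamma y)) / 2 := by
  have h := convexOn_log_Gamma.2 (Set.mem_Ioi.mpr hx) (Set.mem_Ioi.mpr hy)
    (by norm_num : (0 : ℝ) ≤ 1 / 2) (by norm_num : (0 : ℝ) ≤ 1 / 2) (by norm_num)
  simp only [Function.comp, smul_eq_mul] at h
  rw [show (x + y) / 2 = 1 / 2 * x + 1 / 2 * y by ring]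
  linarith

lemma log_div_two_le_log_Gamma_add_one_sub_log_Gamma_add_half {x : ℝ} (hx : 0 < x) :
    log x / 2 ≤ log (Gamma (x + 1)) - log (Gamma (x + 1 / 2)) := by
  have h := log_Gamma_midpoint_le hx (by linarith : 0 < x + 1)
  rw [show (x + (x + 1)) / 2 = x + 1 / 2 by ring, log_Gamma_add_one hx] at h
  rw [log_Gamma_add_one hx]
  linarith

lemma log_Gamma_add_one_sub_log_Gamma_add_half_le {x : ℝ} (hx : -(1 / 2) < x) :
    log (Gamma (x + 1)) - log (Gamma (x + 1 / 2)) ≤ log (x + 1 / 2) / 2 := by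
  have hx' : 0 < x + 1 / 2 := by linarith
  have h := log_Gamma_midpoint_le hx' (by linarith : 0 < x + 3 / 2)
  rw [show (x + 1 / 2 + (x + 3 / 2)) / 2 = x + 1 by ring,
    show x + 3 / 2 = x + 1 / 2 + 1 by ring, log_Gamma_add_one hx'] at h
  linarith

lemma tendsto_log_Gamma_add_one_sub_log_Gamma_add_half_sub_log_div_two :
    Tendsto (fun x : ℝ => log (Gamma (x + 1)) - log (Gamma (x + 1 / 2)) - log x / 2)
      atTop (𝓝 0) := by
  have hupper : Tendsto (fun x : ℝ => (log (x + 1 / 2) - log x) / 2) atTop (𝓝 0) := by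
    simpa using (tendsto_log_comp_add_sub_log (1 / 2)).div_const 2
  refine tendsto_of_tendsto_of_tendsto_of_le_of_le' tendsto_const_nhds hupper ?_ ?_
  · filter_upwards [eventually_gt_atTop 0] with x hx
    linarith [log_div_two_le_log_Gamma_add_one_sub_log_Gamma_add_half hx]
  · filter_upwards [eventually_gt_atTop 0] with x hx
    linarith [log_Gamma_add_one_sub_log_Gamma_add_half_le (by linarith : -(1 / 2) < x)]

lemma tendsto_log_Gamma_add_one_sub_log_Gamma_add_half_div_self :
    Tendsto (fun x : ℝ => (log (Gamma (x + 1)) - log (Gamma (x + 1 / 2))) / x)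
      atTop (𝓝 0) := by
  have := (tendsto_log_Gamma_add_one_sub_log_Gamma_add_half_sub_log_div_two.div_atTop
    tendsto_id).add (tendsto_log_div_self.div_const 2)
  rw [zero_add, zero_div] at this
  refine this.congr' ?_
  filter_upwards [eventually_ne_atTop 0] with x hx
  simp only [id]
  field_simp
  ring

lemma log_Gamma_half_add_half_add_log_Gamma_half_add_one {x : ℝ} (hx : -1 < x) :
    log (Gamma (x / 2 + 1 / 2)) + log (Gamma (x / 2 + 1)) =
      log (Gamma (x + 1)) - x * log 2 + log π / 2 := by
  have h := Gamma_mul_Gamma_add_half (x / 2 + 1 / 2)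
  rw [show x / 2 + 1 / 2 + 1 / 2 = x / 2 + 1 by ring, show 2 * (x / 2 + 1 / 2) = x + 1 by ring,
    show 1 - (x + 1) = -x by ring] at h
  have h1 : 0 < Gamma (x / 2 + 1 / 2) := Gamma_pos_of_pos (by linarith)
  have h2 : 0 < Gamma (x / 2 + 1) := Gamma_pos_of_pos (by linarith)
  have h3 : 0 < Gamma (x + 1) := Gamma_pos_of_pos (by linarith)
  have := congrArg log h
  rw [log_mul h1.ne' h2.ne', log_mul (by positivity) (by positivity), log_mul h3.ne' (by positivity),
    log_rpow two_pos, log_sqrt pi_pos.le] at this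
  linarith

lemma tendsto_log_factorial_div_sub_log :
    Tendsto (fun n : ℕ => log n.factorial / n - log n) atTop (𝓝 (-1)) := by
  have hstirling : Tendsto (fun n : ℕ => log (Stirling.stirlingSeq n) / n) atTop (𝓝 0) :=
    (((continuousAt_log (sqrt_pos.mpr pi_pos).ne').tendsto).comp
      Stirling.tendsto_stirlingSeq_sqrt_pi).div_atTop tendsto_natCast_atTop_atTop
  have hlog : Tendsto (fun n : ℕ => log (2 * n) / (2 * n)) atTop (𝓝 0) :=
    tendsto_log_div_self.comp (tendsto_natCast_atTop_atTop.const_mul_atTop two_pos)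
  have := (hstirling.add hlog).sub_const 1
  rw [zero_add, zero_sub] at this
  refine this.congr' ?_
  filter_upwards [eventually_ne_atTop 0] with n hn
  have hn' : (n : ℝ) ≠ 0 := Nat.cast_ne_zero.mpr hn
  rw [Stirling.log_stirlingSeq_formula, log_div hn' (exp_ne_zero 1), log_exp]
  field_simp
  ring

end Real

lemma tendsto_log_Gamma_half_add_one_div_sub_log_half :
    Tendsto (fun n : ℕ => log (Gamma ((n : ℝ) / 2 + 1)) / n - log ((n : ℝ) / 2) / 2)
      atTop (𝓝 (-(1 / 2))) := by
  have hhalf : Tendsto (fun n : ℕ => (n : ℝ) / 2) atTop atTop :=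
    tendsto_natCast_atTop_atTop.atTop_div_const two_pos
  have hgap := (tendsto_log_Gamma_add_one_sub_log_Gamma_add_half_div_self.comp hhalf).div_const 4
  have hpi := tendsto_one_div_atTop_nhds_zero_nat.const_mul (log π / 4)
  have := ((tendsto_log_factorial_div_sub_log.div_const 2).add hpi).add hgap
  rw [mul_zero, add_zero, zero_div, add_zero, show -1 / 2 = -(1 / 2 : ℝ) by norm_num] at this
  refine this.congr' ?_
  filter_upwards [eventually_ne_atTop 0] with n hn
  have hn' : (n : ℝ) ≠ 0 := Nat.cast_ne_zero.mpr hn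
  have hdup := log_Gamma_half_add_half_add_log_Gamma_half_add_one
    (by linarith [n.cast_nonneg (α := ℝ)])
  rw [Gamma_nat_eq_factorial] at hdup
  simp only [Function.comp_apply]
  rw [log_div hn' two_ne_zero]
  -- keeps `field_simp` away from the arguments of `Gamma`
  generalize log (Gamma (n / 2 + 1)) = A at hdup ⊢
  generalize log (Gamma (n / 2 + 1 / 2)) = B at hdup ⊢
  field_simp
  linarith

lemma unitBallRadius_eq_exp (n : ℕ) :
    unitBallRadius n = exp (log (Gamma ((n : ℝ) / 2 + 1)) / n) / sqrt π := by
  rw [unitBallRadius, rpow_def_of_pos (Gamma_pos_of_pos (by positivity)), mul_one_div]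

lemma unitBallRadius_div_pow_eq_exp {n : ℕ} (hn : 2 ≤ n) :
    (unitBallRadius n / unitBallRadius (n - 1)) ^ (n - 1) =
      exp (log (Gamma ((n : ℝ) / 2 + 1)) - log (Gamma ((n : ℝ) / 2 + 1 / 2)) -
        log (Gamma ((n : ℝ) / 2 + 1)) / n) := by
  have hcast : ((n - 1 : ℕ) : ℝ) = n - 1 := by rw [Nat.cast_sub (by omega)]; simp
  have hn' : (n : ℝ) - 1 ≠ 0 := by
    rw [← hcast]
    exact Nat.cast_ne_zero.mpr (by omega)
  rw [unitBallRadius_eq_exp, unitBallRadius_eq_exp, div_div_div_cancel_right₀ (by positivity),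
    ← exp_sub, ← exp_nat_mul, hcast, show ((n : ℝ) - 1) / 2 + 1 = n / 2 + 1 / 2 by ring]
  congr 1
  field_simp
  ring

theorem tendsto_ratio_pow_sqrt_e :
    Tendsto (fun n : ℕ => (unitBallRadius n / unitBallRadius (n - 1)) ^ (n - 1))
      atTop (nhds (Real.sqrt (Real.exp 1))) := by
  have hgap := tendsto_log_Gamma_add_one_sub_log_Gamma_add_half_sub_log_div_two.comp
    (tendsto_natCast_atTop_atTop.atTop_div_const two_pos)
  have hexp := (continuous_exp.tendsto _).comp
    (hgap.sub tendsto_log_Gamma_half_add_one_div_sub_log_half)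
  rw [sqrt_eq_rpow, exp_one_rpow, show (1 / 2 : ℝ) = 0 - -(1 / 2) by norm_num]
  refine hexp.congr' ?_
  filter_upwards [eventually_ge_atTop 2] with n hn
  rw [unitBallRadius_div_pow_eq_exp hn, Function.comp_apply, Function.comp_apply]
  ring_nf
end

section
/- Let S_n ⊂ ℝ^n be the ball of unit volume centered at the origin and let V_n(d) be the Lebesgue volume of the slab {x ∈ S_n : 0 ≤ x₁ ≤ d}. Then for every d > 0, V_n(d) → √e · ∫₀^d exp(-π e x²) dx as n → ∞. -/
open Real Filter MeasureTheory

/-!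
The slice of the ball `S_{n+1}` at height `x₁ = t` is an `n`-ball of radius `√(R_{n+1}² - t²)`,
so the slab has volume `∫₀^d (√(R_{n+1}² - t²) / R_n)^n dt`. The integrand factors as
`(R_{n+1}/R_n)^n · (1 - t²/R_{n+1}²)^{n/2}`. Log-convexity of `Γ` gives `Γ(x + 1/2)² ~ x Γ(x)²`,
hence `(R_{n+1}/R_n)^n → √e` and, by the ratio test for `n`-th roots, `R_n²/n → 1/(2πe)`; so the
second factor tends to `exp (-π e t²)` while the first one dominates the integrand uniformly, and
dominated convergence concludes.
-/

open Topology

namespace Real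

theorem Gamma_add_div_two_sq_le {s t : ℝ} (hs : 0 < s) (ht : 0 < t) :
    Gamma ((s + t) / 2) ^ 2 ≤ Gamma s * Gamma t := by
  have h := Gamma_mul_add_mul_le_rpow_Gamma_mul_rpow_Gamma hs ht one_half_pos one_half_pos
    (add_halves 1)
  rw [← sqrt_eq_rpow, ← sqrt_eq_rpow, ← sqrt_mul (Gamma_pos_of_pos hs).le,
    show 1 / 2 * s + 1 / 2 * t = (s + t) / 2 by ring] at h
  have := Gamma_pos_of_pos hs
  have := Gamma_pos_of_pos ht
  calc Gamma ((s + t) / 2) ^ 2 ≤ √(Gamma s * Gamma t) ^ 2 := by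
        gcongr
    _ = Gamma s * Gamma t := sq_sqrt (by positivity)

theorem Gamma_add_half_sq_le {x : ℝ} (hx : 0 < x) : Gamma (x + 1 / 2) ^ 2 ≤ x * Gamma x ^ 2 := by
  have h := Gamma_add_div_two_sq_le hx (by linarith : 0 < x + 1)
  rw [Gamma_add_one hx.ne', show (x + (x + 1)) / 2 = x + 1 / 2 by ring] at h
  linarith

theorem mul_Gamma_sq_le {x : ℝ} (hx : 0 < x) :
    (x * Gamma x) ^ 2 ≤ (x + 1 / 2) * Gamma (x + 1 / 2) ^ 2 := by
  have h := Gamma_add_div_two_sq_le (by linarith : 0 < x + 1 / 2) (by linarith : 0 < x + 1 / 2 + 1)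
  rw [Gamma_add_one (by linarith : x + 1 / 2 ≠ 0),
    show (x + 1 / 2 + (x + 1 / 2 + 1)) / 2 = x + 1 by ring, Gamma_add_one hx.ne'] at h
  linarith

theorem tendsto_Gamma_add_half_sq_div :
    Tendsto (fun x => Gamma (x + 1 / 2) ^ 2 / (x * Gamma x ^ 2)) atTop (𝓝 1) := by
  have hlow : Tendsto (fun x : ℝ => (1 + (2 * x)⁻¹)⁻¹) atTop (𝓝 1) := by
    simpa using ((tendsto_inv_atTop_zero.comp
      ((tendsto_id (α := ℝ)).const_mul_atTop two_pos)).const_add 1).inv₀ (by norm_num)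
  refine tendsto_of_tendsto_of_tendsto_of_le_of_le' hlow tendsto_const_nhds ?_ ?_
  · filter_upwards [eventually_gt_atTop 0] with x hx
    have hG := Gamma_pos_of_pos hx
    rw [show (1 + (2 * x)⁻¹)⁻¹ = x / (x + 1 / 2) by field_simp,
      div_le_div_iff₀ (by positivity) (by positivity)]
    nlinarith [mul_Gamma_sq_le hx]
  · filter_upwards [eventually_gt_atTop 0] with x hx
    have hG := Gamma_pos_of_pos hx
    rw [div_le_one (by positivity)]
    exact Gamma_add_half_sq_le hx

lemma Gamma_natCast_div_two_add_one_pos (n : ℕ) : 0 < Gamma (n / 2 + 1) :=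
  Gamma_pos_of_pos (by positivity)

end Real

theorem tendsto_rpow_inv_of_tendsto_div {a : ℕ → ℝ} {L : ℝ} (ha : ∀ n, 0 < a n) (hL : 0 < L)
    (h : Tendsto (fun n => a (n + 1) / a n) atTop (𝓝 L)) :
    Tendsto (fun n : ℕ => a n ^ (n⁻¹ : ℝ)) atTop (𝓝 L) := by
  have hlog : Tendsto (fun n => log (a (n + 1)) - log (a n)) atTop (𝓝 (log L)) := by
    refine ((continuousAt_log hL.ne').tendsto.comp h).congr fun n => ?_
    exact log_div (ha _).ne' (ha n).ne'
  have hmean : Tendsto (fun n : ℕ => (n⁻¹ : ℝ) * (log (a n) - log (a 0))) atTop (𝓝 (log L)) := by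
    simpa only [Finset.sum_range_sub (fun n => log (a n))] using hlog.cesaro
  have hfirst : Tendsto (fun n : ℕ => (n⁻¹ : ℝ) * log (a 0)) atTop (𝓝 0) := by
    simpa using tendsto_inv_atTop_zero.comp tendsto_natCast_atTop_atTop |>.mul_const (log (a 0))
  have hexp := (continuous_exp.tendsto _).comp (hmean.add hfirst)
  rw [add_zero, exp_log hL] at hexp
  refine hexp.congr fun n => ?_
  simp only [Function.comp_apply, rpow_def_of_pos (ha n)]
  ring_nf

theorem tendsto_sqrt_one_sub_pow {s : ℕ → ℝ} {c : ℝ}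
    (hs : Tendsto (fun n : ℕ => n * s n) atTop (𝓝 c)) :
    Tendsto (fun n => √(1 - s n) ^ n) atTop (𝓝 (exp (-c / 2))) := by
  have hs0 : Tendsto s atTop (𝓝 0) := by
    have := hs.mul (tendsto_inv_atTop_zero.comp (tendsto_natCast_atTop_atTop (R := ℝ)))
    rw [mul_zero] at this
    refine this.congr' ?_
    filter_upwards [eventually_ne_atTop 0] with n hn
    simp only [Function.comp_apply]
    field_simp
  have hpow : Tendsto (fun n => (1 + -s n) ^ n) atTop (𝓝 (exp (-c))) :=
    tendsto_one_add_pow_exp_of_tendsto (by simpa only [mul_neg] using hs.neg)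
  rw [exp_half]
  refine hpow.sqrt.congr' ?_
  filter_upwards [hs0.eventually_le_const one_pos] with n hn
  rw [← sub_eq_add_neg, ← sqrt_sq (pow_nonneg (sqrt_nonneg _) n), ← pow_mul, mul_comm, pow_mul,
    sq_sqrt (by linarith)]

lemma unitBallRadius_pos (n : ℕ) : 0 < unitBallRadius n := by
  have := Gamma_natCast_div_two_add_one_pos n
  unfold unitBallRadius
  positivity

lemma unitBallRadius_pow (n : ℕ) : unitBallRadius n ^ n = Gamma (n / 2 + 1) / √π ^ n := by
  rcases eq_or_ne n 0 with rfl | hn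
  · simp
  rw [unitBallRadius, div_pow, one_div,
    rpow_inv_natCast_pow (Gamma_natCast_div_two_add_one_pos n).le hn]

lemma unitBallRadius_pow_succ_div_pow (n : ℕ) :
    unitBallRadius (n + 1) ^ (n + 1) / unitBallRadius n ^ n
      = Gamma ((n / 2 + 1) + 1 / 2) / (√π * Gamma (n / 2 + 1)) := by
  have := Gamma_natCast_div_two_add_one_pos n
  have : 0 < √π := by positivity
  rw [unitBallRadius_pow, unitBallRadius_pow, pow_succ]
  push_cast
  field_simp
  ring_nf

lemma tendsto_unitBallRadius_pow_succ_div_pow_sq :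
    Tendsto (fun n : ℕ => (unitBallRadius (n + 1) ^ (n + 1) / unitBallRadius n ^ n) ^ 2 / (n + 1))
      atTop (𝓝 (2 * π)⁻¹) := by
  have hx : Tendsto (fun n : ℕ => (n / 2 + 1 : ℝ)) atTop atTop :=
    tendsto_atTop_add_const_right _ _ (tendsto_natCast_atTop_atTop.atTop_div_const two_pos)
  have hratio : Tendsto (fun n : ℕ => (n / 2 + 1 : ℝ) / (n + 1)) atTop (𝓝 (1 / 2)) := by
    have := (tendsto_one_div_add_atTop_nhds_zero_nat (𝕜 := ℝ)).const_mul (1 / 2)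
      |>.const_add (1 / 2)
    rw [mul_zero, add_zero] at this
    refine this.congr fun n => ?_
    field_simp
    ring
  have h := ((tendsto_Gamma_add_half_sq_div.comp hx).mul hratio).div_const π
  rw [one_mul, show (1 / 2 : ℝ) / π = (2 * π)⁻¹ by ring] at h
  refine h.congr fun n => ?_
  have := Gamma_natCast_div_two_add_one_pos n
  simp only [Function.comp_apply, unitBallRadius_pow_succ_div_pow, div_pow, mul_pow,
    sq_sqrt pi_pos.le]
  field_simp

lemma tendsto_unitBallRadius_sq_div :
    Tendsto (fun n : ℕ => unitBallRadius n ^ 2 / n) atTop (𝓝 (2 * π * exp 1)⁻¹) := by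
  set a : ℕ → ℝ := fun n => (unitBallRadius n ^ 2 / n) ^ n
  have ha : ∀ n, 0 < a n := by
    rintro (_ | n)
    · simp [a]
    · have := unitBallRadius_pos (n + 1)
      positivity
  have hpow : Tendsto (fun n : ℕ => ((n : ℝ) / (n + 1)) ^ n) atTop (𝓝 (exp (-1))) := by
    have h : Tendsto (fun n : ℕ => (n : ℝ) * (-1 / (n + 1))) atTop (𝓝 (-1)) := by
      refine (tendsto_natCast_div_add_atTop (1 : ℝ)).neg.congr fun n => ?_
      ring
    refine (tendsto_one_add_pow_exp_of_tendsto h).congr fun n => ?_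
    congr 1
    field_simp
    ring
  have hdiv : Tendsto (fun n => a (n + 1) / a n) atTop (𝓝 ((2 * π)⁻¹ * exp (-1))) := by
    refine (tendsto_unitBallRadius_pow_succ_div_pow_sq.mul hpow).congr' ?_
    filter_upwards [eventually_ne_atTop 0] with n hn
    have := unitBallRadius_pos n
    have := unitBallRadius_pos (n + 1)
    simp only [a, div_pow, ← pow_mul]
    push_cast
    field_simp
    ring
  rw [show (2 * π * exp 1)⁻¹ = (2 * π)⁻¹ * exp (-1) by rw [exp_neg]; ring]
  refine (tendsto_rpow_inv_of_tendsto_div ha (by positivity) hdiv).congr' ?_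
  filter_upwards [eventually_ne_atTop 0] with n hn
  exact pow_rpow_inv_natCast (by positivity) hn

lemma tendsto_unitBallRadius_atTop : Tendsto unitBallRadius atTop atTop := by
  have hsq : Tendsto (fun n : ℕ => unitBallRadius n ^ 2) atTop atTop := by
    refine (tendsto_unitBallRadius_sq_div.pos_mul_atTop (by positivity)
      tendsto_natCast_atTop_atTop).congr' ?_
    filter_upwards [eventually_ne_atTop 0] with n hn
    field_simp
  refine (tendsto_sqrt_atTop.comp hsq).congr fun n => ?_
  exact sqrt_sq (unitBallRadius_pos n).le

lemma tendsto_natCast_div_unitBallRadius_succ_sq :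
    Tendsto (fun n : ℕ => n / unitBallRadius (n + 1) ^ 2) atTop (𝓝 (2 * π * exp 1)) := by
  have h := (tendsto_natCast_div_add_atTop (1 : ℝ)).div
    ((tendsto_add_atTop_iff_nat 1).2 tendsto_unitBallRadius_sq_div) (by positivity)
  rw [one_div, inv_inv] at h
  refine h.congr fun n => ?_
  have := unitBallRadius_pos (n + 1)
  simp only [Pi.div_apply]
  push_cast
  field_simp

lemma tendsto_unitBallRadius_succ_div_pow :
    Tendsto (fun n : ℕ => (unitBallRadius (n + 1) / unitBallRadius n) ^ n) atTop
      (𝓝 (√(exp 1))) := by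
  have hsq : Tendsto (fun n : ℕ => ((unitBallRadius (n + 1) / unitBallRadius n) ^ n) ^ 2) atTop
      (𝓝 (exp 1)) := by
    have h := tendsto_unitBallRadius_pow_succ_div_pow_sq.div
      ((tendsto_add_atTop_iff_nat 1).2 tendsto_unitBallRadius_sq_div) (by positivity)
    rw [show (2 * π)⁻¹ / (2 * π * exp 1)⁻¹ = exp 1 by field_simp] at h
    refine h.congr fun n => ?_
    have := unitBallRadius_pos n
    have := unitBallRadius_pos (n + 1)
    simp only [Pi.div_apply]
    rw [div_pow (unitBallRadius _)]
    push_cast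
    field_simp
    ring
  refine hsq.sqrt.congr fun n => ?_
  exact sqrt_sq (by have := unitBallRadius_pos n; have := unitBallRadius_pos (n + 1); positivity)

lemma volume_closedBall_eq_unitBallRadius (n : ℕ) (x : EuclideanSpace ℝ (Fin n)) {ρ : ℝ}
    (hρ : 0 ≤ ρ) :
    volume (Metric.closedBall x ρ) = ENNReal.ofReal ((ρ / unitBallRadius n) ^ n) := by
  rcases n.eq_zero_or_pos with rfl | hn
  · rw [volume_euclideanSpace_eq_dirac, Measure.dirac_apply_of_mem]
    · simp
    · simpa [Subsingleton.elim x 0] using hρ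
  have : Nonempty (Fin n) := ⟨⟨0, hn⟩⟩
  have := Gamma_natCast_div_two_add_one_pos n
  rw [EuclideanSpace.volume_closedBall, Fintype.card_fin, ← ENNReal.ofReal_pow hρ,
    ← ENNReal.ofReal_mul (by positivity), div_pow, unitBallRadius_pow]
  congr 1
  field_simp

lemma volume_slab_eq_lintegral (n : ℕ) {r d : ℝ} (hd : 0 ≤ d) (hdr : d ≤ r) :
    volume {x : EuclideanSpace ℝ (Fin (n + 1)) | ‖x‖ ≤ r ∧ 0 ≤ x 0 ∧ x 0 ≤ d}
      = ∫⁻ t in Set.Icc 0 d, ENNReal.ofReal ((√(r ^ 2 - t ^ 2) / unitBallRadius n) ^ n) := by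
  let e : EuclideanSpace ℝ (Fin (n + 1)) → ℝ × EuclideanSpace ℝ (Fin n) :=
    Prod.map id (WithLp.toLp 2) ∘ MeasurableEquiv.piFinSuccAbove (fun _ => ℝ) 0 ∘ WithLp.ofLp
  have he : MeasurePreserving e :=
    ((MeasurePreserving.id volume).prod (PiLp.volume_preserving_toLp _)).comp
      ((volume_preserving_piFinSuccAbove _ 0).comp (PiLp.volume_preserving_ofLp _))
  let B : Set (ℝ × EuclideanSpace ℝ (Fin n)) :=
    {p | p.1 ^ 2 + ‖p.2‖ ^ 2 ≤ r ^ 2 ∧ p.1 ∈ Set.Icc 0 d}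
  have hB : MeasurableSet B :=
    (measurableSet_le (f := fun p : ℝ × EuclideanSpace ℝ (Fin n) => p.1 ^ 2 + ‖p.2‖ ^ 2)
      (by fun_prop) measurable_const).inter (measurable_fst measurableSet_Icc)
  have hslab : {x : EuclideanSpace ℝ (Fin (n + 1)) | ‖x‖ ≤ r ∧ 0 ≤ x 0 ∧ x 0 ≤ d} = e ⁻¹' B := by
    ext x
    have hnorm : ‖x‖ ^ 2
        = x 0 ^ 2 + ‖(WithLp.toLp 2 (fun j => x j.succ) : EuclideanSpace ℝ (Fin n))‖ ^ 2 := by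
      simp [EuclideanSpace.real_norm_sq_eq, Fin.sum_univ_succ]
    rw [Set.mem_ofPred_eq, ← sq_le_sq₀ (norm_nonneg x) (hd.trans hdr), hnorm]
    rfl
  rw [hslab, he.measure_preimage hB.nullMeasurableSet, Measure.volume_eq_prod,
    Measure.prod_apply hB, ← lintegral_indicator measurableSet_Icc]
  refine lintegral_congr fun t => ?_
  by_cases ht : t ∈ Set.Icc 0 d
  · have hball : Prod.mk t ⁻¹' B = Metric.closedBall 0 √(r ^ 2 - t ^ 2) := by
      ext y
      have htr : t ^ 2 ≤ r ^ 2 := by nlinarith [ht.1, ht.2]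
      simp only [B, Set.mem_preimage, Set.mem_ofPred_eq, mem_closedBall_zero_iff, ht, and_true]
      rw [le_sqrt (norm_nonneg y) (by linarith)]
      constructor <;> intro h <;> linarith
    rw [Set.indicator_of_mem ht, hball, volume_closedBall_eq_unitBallRadius _ _ (sqrt_nonneg _)]
  · have hempty : Prod.mk t ⁻¹' B = ∅ := Set.eq_empty_of_forall_notMem fun y hy => ht hy.2
    rw [Set.indicator_of_notMem ht, hempty, measure_empty]

lemma tendsto_slab_profile (t : ℝ) :
    Tendsto (fun n : ℕ => (√(unitBallRadius (n + 1) ^ 2 - t ^ 2) / unitBallRadius n) ^ n) atTop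
      (𝓝 (√(exp 1) * exp (-(π * exp 1) * t ^ 2))) := by
  have hs : Tendsto (fun n : ℕ => n * (t ^ 2 / unitBallRadius (n + 1) ^ 2)) atTop
      (𝓝 (t ^ 2 * (2 * π * exp 1))) :=
    (tendsto_natCast_div_unitBallRadius_succ_sq.const_mul (t ^ 2)).congr fun n => by ring
  have h := tendsto_unitBallRadius_succ_div_pow.mul (tendsto_sqrt_one_sub_pow hs)
  rw [show -(t ^ 2 * (2 * π * exp 1)) / 2 = -(π * exp 1) * t ^ 2 by ring] at h
  refine h.congr fun n => ?_
  have hR := unitBallRadius_pos (n + 1)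
  rw [← mul_pow, show unitBallRadius (n + 1) ^ 2 - t ^ 2
    = unitBallRadius (n + 1) ^ 2 * (1 - t ^ 2 / unitBallRadius (n + 1) ^ 2) by field_simp,
    sqrt_mul (by positivity), sqrt_sq hR.le]
  ring

lemma tendsto_integral_slab_profile (d : ℝ) :
    Tendsto
      (fun n : ℕ => ∫ t in 0..d, (√(unitBallRadius (n + 1) ^ 2 - t ^ 2) / unitBallRadius n) ^ n)
      atTop (𝓝 (∫ t in 0..d, √(exp 1) * exp (-(π * exp 1) * t ^ 2))) := by
  refine intervalIntegral.tendsto_integral_filter_of_dominated_convergence (fun _ => √(exp 1) + 1)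
    (Eventually.of_forall fun n => by fun_prop) ?_ intervalIntegrable_const
    (Eventually.of_forall fun t _ => tendsto_slab_profile t)
  filter_upwards [tendsto_unitBallRadius_succ_div_pow.eventually_le_const (lt_add_one _)] with n hn
  refine Eventually.of_forall fun t _ => ?_
  have hR := unitBallRadius_pos (n + 1)
  have := unitBallRadius_pos n
  rw [norm_of_nonneg (by positivity)]
  refine le_trans ?_ hn
  gcongr
  exact (sqrt_le_sqrt (sub_le_self _ (sq_nonneg t))).trans_eq (sqrt_sq hR.le)

lemma toReal_volume_slab_eq_integral (n : ℕ) {r d : ℝ} (hd : 0 ≤ d) (hdr : d ≤ r) :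
    (volume {x : EuclideanSpace ℝ (Fin (n + 1)) | ‖x‖ ≤ r ∧ 0 ≤ x 0 ∧ x 0 ≤ d}).toReal
      = ∫ t in 0..d, (√(r ^ 2 - t ^ 2) / unitBallRadius n) ^ n := by
  have := unitBallRadius_pos n
  rw [volume_slab_eq_lintegral n hd hdr, ← integral_eq_lintegral_of_nonneg_ae
    (Eventually.of_forall fun t => by positivity) (by fun_prop),
    integral_Icc_eq_integral_Ioc, intervalIntegral.integral_of_le hd]

/-- The volume of the slab `{x ∈ Sₙ : 0 ≤ x₁ ≤ d}` of the unit-volume ball `Sₙ ⊂ ℝⁿ`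
tends to `√e ∫₀^d exp (-π e x²) dx` as `n → ∞`. -/
theorem tendsto_slab_volume (d : ℝ) (hd : 0 < d) :
    Tendsto
      (fun n : ℕ =>
        (volume {x : EuclideanSpace ℝ (Fin (n + 1)) |
          ‖x‖ ≤ unitBallRadius (n + 1) ∧ 0 ≤ x 0 ∧ x 0 ≤ d}).toReal)
      atTop
      (nhds (Real.sqrt (Real.exp 1) *
        ∫ x in (0 : ℝ)..d, Real.exp (-(π * Real.exp 1) * x ^ 2))) := by
  rw [← intervalIntegral.integral_const_mul]
  refine (tendsto_integral_slab_profile d).congr' ?_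
  have hR : Tendsto (fun n => unitBallRadius (n + 1)) atTop atTop :=
    (tendsto_add_atTop_iff_nat 1).2 tendsto_unitBallRadius_atTop
  filter_upwards [hR.eventually_ge_atTop d] with n hn
  exact (toReal_volume_slab_eq_integral n hd.le hn).symm
end

section
/- For every n there exists a convex body K_n ⊂ ℝ^n of unit volume (a box with sides 1/2, …, 1/2, 2^{n-1}) and subsets A_n, B_n ⊆ K_n each of volume 1/4 with dist(A_n, B_n) ≥ 2^{n-2}; hence the uniform bounded-distance conclusion fails without symmetry assumptions on the body. -/
open MeasureTheory Set

/-- The infimum of distances between points of `A` and points of `B`. -/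
noncomputable def setDist {n : ℕ} (A B : Set (EuclideanSpace ℝ (Fin n))) : ℝ :=
  sInf {d | ∃ x ∈ A, ∃ y ∈ B, d = dist x y}

/-!
Take `K = [0, 1/2]^(n-1) × [0, 2^(n-1)]`, of volume `2^(1-n) · 2^(n-1) = 1`, and let `A`, `B` be
its bottom and top quarters along the long edge. Both have volume `1/4`, and the last coordinate
alone separates them by the middle half of that edge, `2^(n-2)`.
-/

theorem le_setDist {n : ℕ} {A B : Set (EuclideanSpace ℝ (Fin n))} {d : ℝ}
    (hA : A.Nonempty) (hB : B.Nonempty) (h : ∀ x ∈ A, ∀ y ∈ B, d ≤ dist x y) :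
    d ≤ setDist A B := by
  obtain ⟨x, hx⟩ := hA
  obtain ⟨y, hy⟩ := hB
  refine le_csInf ⟨_, x, hx, y, hy, rfl⟩ ?_
  rintro _ ⟨x, hx, y, hy, rfl⟩
  exact h x hx y hy

namespace EuclideanSpace

def box {ι : Type*} (a b : ι → ℝ) : Set (EuclideanSpace ℝ ι) :=
  WithLp.ofLp ⁻¹' Icc a b

theorem convex_box {ι : Type*} (a b : ι → ℝ) : Convex ℝ (box a b) :=
  (convex_Icc a b).linear_preimage (WithLp.linearEquiv 2 ℝ (ι → ℝ)).toLinearMap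

theorem isCompact_box {ι : Type*} (a b : ι → ℝ) : IsCompact (box a b) :=
  (PiLp.homeomorph 2 fun _ : ι => ℝ).isCompact_preimage.2 isCompact_Icc

theorem volume_box {ι : Type*} [Fintype ι] (a b : ι → ℝ) :
    volume (box a b) = ∏ i, ENNReal.ofReal (b i - a i) := by
  rw [box, (PiLp.volume_preserving_ofLp ι).measure_preimage measurableSet_Icc.nullMeasurableSet,
    Real.volume_Icc_pi]

theorem box_subset_box {ι : Type*} {a b a' b' : ι → ℝ} (ha : a' ≤ a) (hb : b ≤ b') :
    box a b ⊆ box a' b' :=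
  preimage_mono (Icc_subset_Icc ha hb)

theorem box_nonempty {ι : Type*} {a b : ι → ℝ} (h : a ≤ b) : (box a b).Nonempty :=
  ⟨WithLp.toLp 2 a, left_mem_Icc.2 h⟩

theorem sub_le_dist_of_mem_box {ι : Type*} [Fintype ι] {a b a' b' : ι → ℝ}
    {x y : EuclideanSpace ℝ ι} (hx : x ∈ box a b) (hy : y ∈ box a' b') (i : ι) :
    a' i - b i ≤ dist x y :=
  calc a' i - b i ≤ y i - x i := sub_le_sub (hy.1 i) (hx.2 i)
    _ ≤ dist (y i) (x i) := Real.sub_le_dist _ _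
    _ ≤ dist x y := dist_comm x y ▸ PiLp.dist_apply_le y x i

end EuclideanSpace

open EuclideanSpace

/-- The slab `[0, 1/2]^m × [s, t]` in `ℝ^(m+1)`. -/
def halfCubeSlab (m : ℕ) (s t : ℝ) : Set (EuclideanSpace ℝ (Fin (m + 1))) :=
  box (Fin.snoc (α := fun _ => ℝ) 0 s) (Fin.snoc (α := fun _ => ℝ) (fun _ => 1 / 2) t)

theorem volume_halfCubeSlab (m : ℕ) (s t : ℝ) :
    volume (halfCubeSlab m s t) = ENNReal.ofReal ((t - s) / 2 ^ m) := by
  rw [halfCubeSlab, volume_box, Fin.prod_univ_castSucc]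
  simp only [Fin.snoc_castSucc, Fin.snoc_last, Pi.zero_apply, sub_zero, Finset.prod_const,
    Finset.card_univ, Fintype.card_fin]
  rw [← ENNReal.ofReal_pow (by norm_num), ← ENNReal.ofReal_mul (by positivity)]
  congr 1
  rw [one_div_pow]
  field_simp

theorem halfCubeSlab_subset {m : ℕ} {s t s' t' : ℝ} (hs : s' ≤ s) (ht : t ≤ t') :
    halfCubeSlab m s t ⊆ halfCubeSlab m s' t' := by
  refine box_subset_box (fun i => ?_) (fun i => ?_) <;> induction i using Fin.lastCases <;>
    simp [hs, ht]

theorem halfCubeSlab_nonempty {m : ℕ} {s t : ℝ} (h : s ≤ t) : (halfCubeSlab m s t).Nonempty := by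
  refine box_nonempty fun i => ?_
  induction i using Fin.lastCases <;> simp [h]

theorem sub_le_dist_of_mem_halfCubeSlab {m : ℕ} {s t s' t' : ℝ}
    {x y : EuclideanSpace ℝ (Fin (m + 1))} (hx : x ∈ halfCubeSlab m s t)
    (hy : y ∈ halfCubeSlab m s' t') : s' - t ≤ dist x y := by
  simpa using sub_le_dist_of_mem_box hx hy (Fin.last m)

/-- For every `n ≥ 1` there is a convex body `Kₙ ⊂ ℝⁿ` of unit volume (an elongated box)
containing subsets `Aₙ, Bₙ` each of volume `1/4` with `dist (Aₙ, Bₙ) ≥ 2^(n-2)`; so the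
uniform bounded-distance conclusion fails without symmetry assumptions on the body. -/
theorem exists_elongated_box_counterexample (n : ℕ) (hn : 1 ≤ n) :
    ∃ K A B : Set (EuclideanSpace ℝ (Fin n)),
      Convex ℝ K ∧ IsCompact K ∧ volume K = 1 ∧
      A ⊆ K ∧ B ⊆ K ∧
      volume A = ENNReal.ofReal (1 / 4) ∧ volume B = ENNReal.ofReal (1 / 4) ∧
      (2 : ℝ) ^ ((n : ℤ) - 2) ≤ setDist A B := by
  obtain ⟨m, rfl⟩ : ∃ m, n = m + 1 := ⟨n - 1, by omega⟩
  have hpos : (0 : ℝ) < 2 ^ m := by positivity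
  refine ⟨halfCubeSlab m 0 (2 ^ m), halfCubeSlab m 0 (2 ^ m / 4),
    halfCubeSlab m (3 * 2 ^ m / 4) (2 ^ m), convex_box _ _, isCompact_box _ _, ?_,
    halfCubeSlab_subset le_rfl (by linarith), halfCubeSlab_subset (by positivity) le_rfl,
    ?_, ?_, ?_⟩
  · simp [volume_halfCubeSlab, hpos.ne']
  · rw [volume_halfCubeSlab]; congr 1; field_simp; ring
  · rw [volume_halfCubeSlab]; congr 1; field_simp; ring
  have hgap : (2 : ℝ) ^ (((m + 1 : ℕ) : ℤ) - 2) = 3 * 2 ^ m / 4 - 2 ^ m / 4 := by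
    rw [show ((m + 1 : ℕ) : ℤ) - 2 = m - 1 by push_cast; ring, zpow_sub₀ two_ne_zero,
      zpow_natCast, zpow_one]
    ring
  rw [hgap]
  exact le_setDist (halfCubeSlab_nonempty (by positivity)) (halfCubeSlab_nonempty (by linarith))
    fun x hx y hy => sub_le_dist_of_mem_halfCubeSlab hx hy
end
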